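/- Under the discretized (Galerkin) piezoelectric setting with strictly positive damping parameters α > 0 and β > 0: let t₀ ≥ 0, let f : ℝ → ℝⁿ be continuous and g : ℝ → ℝᵏ be continuously differentiable with f(t) = 0 and g(t) = 0 for all t ≥ t₀, and let (u, φ) solve the discretized piezoelectric system on [0, ∞) with u twice continuously differentiable and φ continuously differentiable. Then ∫_{t₀}^∞ ⟨M u'(s), u'(s)⟩ ds < ∞ and ∫_{t₀}^∞ ⟨K u'(s), u'(s)⟩ ds < ∞. -/

import Mathlib

/-!
With the energy `E = (⟨M u', u'⟩ + ⟨K u, u⟩ + ⟨A φ, φ⟩) / 2`, which is nonnegative, the system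
gives `E' = -(α ⟨M u', u'⟩ + β ⟨K u', u'⟩)` once the forcing has been switched off: differentiating
the constraint `Cᵀ u = A φ` yields `A φ' = Cᵀ u'`, and then the two coupling terms cancel.
So the dissipation is a nonnegative derivative of the function `-E`, which is bounded above
by `0`, and its integral over `[t₀, b]` is at most `E t₀` for every `b`. Both summands of the
dissipation are nonnegative with positive coefficients, so each is integrable.
-/

open MeasureTheory Matrix Set Filter

/-- The pair `(u, φ)` (with first and second derivatives `u'`, `u''` of `u`) solves the
discretized (Galerkin) piezoelectric system with mass matrix `M`, stiffness matrix `K`,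
dielectric matrix `A`, piezoelectric coupling matrix `C`, Rayleigh damping parameters
`α, β` and forcing terms `f, g` on the time set `I`. -/
def PiezoSolves {n k : ℕ} (M K : Matrix (Fin n) (Fin n) ℝ)
    (A : Matrix (Fin k) (Fin k) ℝ) (C : Matrix (Fin n) (Fin k) ℝ)
    (α β : ℝ) (f : ℝ → Fin n → ℝ) (g : ℝ → Fin k → ℝ)
    (u u' u'' : ℝ → Fin n → ℝ) (φ : ℝ → Fin k → ℝ) (I : Set ℝ) : Prop :=
  (∀ t ∈ I, HasDerivAt u (u' t) t) ∧
  (∀ t ∈ I, HasDerivAt u' (u'' t) t) ∧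
  (∀ t ∈ I,
    M.mulVec (u'' t) + α • M.mulVec (u' t) + K.mulVec (u t)
      + β • K.mulVec (u' t) + C.mulVec (φ t) = f t) ∧
  (∀ t ∈ I, Cᵀ.mulVec (u t) - A.mulVec (φ t) = g t)

section Calculus

variable {𝕜 ι κ : Type*} [NontriviallyNormedField 𝕜] [Fintype ι] {v w : 𝕜 → ι → 𝕜}
  {v' w' : ι → 𝕜} {t : 𝕜}

theorem HasDerivAt.dotProduct (hv : HasDerivAt v v' t) (hw : HasDerivAt w w' t) :
    HasDerivAt (fun s => v s ⬝ᵥ w s) (v' ⬝ᵥ w t + v t ⬝ᵥ w') t := by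
  simp only [_root_.dotProduct, ← Finset.sum_add_distrib]
  exact HasDerivAt.fun_sum fun i _ => (hasDerivAt_pi.1 hv i).mul (hasDerivAt_pi.1 hw i)

theorem HasDerivAt.matrix_mulVec (B : Matrix κ ι 𝕜) (hv : HasDerivAt v v' t) :
    HasDerivAt (fun s => B *ᵥ v s) (B *ᵥ v') t :=
  hasDerivAt_pi.2 fun i =>
    ((hasDerivAt_const t (B i)).dotProduct hv).congr_deriv (by rw [zero_dotProduct, zero_add]; rfl)

end Calculus

section Quadratic

variable {ι : Type*} [Fintype ι]

theorem Matrix.IsSymm.mulVec_dotProduct_comm {R : Type*} [CommSemiring R] {M : Matrix ι ι R}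
    (hM : M.IsSymm) (x y : ι → R) : M *ᵥ x ⬝ᵥ y = M *ᵥ y ⬝ᵥ x := by
  rw [dotProduct_comm, dotProduct_mulVec, ← mulVec_transpose, hM.eq]

theorem Matrix.IsSymm.hasDerivAt_mulVec_dotProduct_self {𝕜 : Type*} [NontriviallyNormedField 𝕜]
    {M : Matrix ι ι 𝕜} (hM : M.IsSymm) {v : 𝕜 → ι → 𝕜} {v' : ι → 𝕜} {t : 𝕜}
    (hv : HasDerivAt v v' t) :
    HasDerivAt (fun s => M *ᵥ v s ⬝ᵥ v s) (2 * (M *ᵥ v t ⬝ᵥ v')) t :=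
  ((hv.matrix_mulVec M).dotProduct hv).congr_deriv (by rw [hM.mulVec_dotProduct_comm]; ring)

theorem Matrix.PosSemidef.mulVec_dotProduct_self_nonneg {R : Type*} [CommRing R] [PartialOrder R]
    [StarRing R] [TrivialStar R] {M : Matrix ι ι R} (hM : M.PosSemidef) (x : ι → R) :
    0 ≤ M *ᵥ x ⬝ᵥ x := by
  simpa [dotProduct_comm] using hM.dotProduct_mulVec_nonneg x

end Quadratic

theorem integrableOn_Ioi_deriv_of_nonneg_of_le {g g' : ℝ → ℝ} {a c : ℝ}
    (hcont : ContinuousWithinAt g (Ici a) a) (hderiv : ∀ x ∈ Ioi a, HasDerivAt g (g' x) x)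
    (g'pos : ∀ x ∈ Ioi a, 0 ≤ g' x) (hg : ∀ x ∈ Ioi a, g x ≤ c) :
    IntegrableOn g' (Ioi a) := by
  have hcont : ContinuousOn g (Ici a) := by
    intro x hx
    rcases hx.out.eq_or_lt with rfl | hx
    · exact hcont
    · exact (hderiv x hx).continuousAt.continuousWithinAt
  have hint : ∀ b, IntegrableOn g' (Ioc a b) := fun b =>
    intervalIntegral.integrableOn_deriv_of_nonneg (hcont.mono Icc_subset_Ici_self)
      (fun y hy => hderiv y hy.1) fun y hy => g'pos y hy.1
  refine integrableOn_Ioi_of_intervalIntegral_norm_bounded (c - g a) a hint tendsto_id ?_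
  filter_upwards [Ioi_mem_atTop a] with b hb
  calc ∫ y in a..b, ‖g' y‖
      = ∫ y in a..b, g' y := by
        refine intervalIntegral.integral_congr_ae (ae_of_all _ fun y hy => ?_)
        rw [uIoc_of_le hb.le] at hy
        exact Real.norm_of_nonneg (g'pos y hy.1)
    _ = g b - g a :=
        intervalIntegral.integral_eq_sub_of_hasDerivAt_of_le hb.le
          (hcont.mono Icc_subset_Ici_self) (fun y hy => hderiv y hy.1)
          ((intervalIntegrable_iff_integrableOn_Ioc_of_le hb.le).2 (hint b))
    _ ≤ c - g a := by linarith [hg b hb]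

open Topology

section Piezo

variable {n k : ℕ} {M K : Matrix (Fin n) (Fin n) ℝ} {A : Matrix (Fin k) (Fin k) ℝ}
  {C : Matrix (Fin n) (Fin k) ℝ} {α β : ℝ} {f : ℝ → Fin n → ℝ} {g : ℝ → Fin k → ℝ}
  {u u' u'' : ℝ → Fin n → ℝ} {φ φ' : ℝ → Fin k → ℝ} {I J : Set ℝ} {t₀ : ℝ}

theorem PiezoSolves.mono (hsol : PiezoSolves M K A C α β f g u u' u'' φ I) (hJI : J ⊆ I) :
    PiezoSolves M K A C α β f g u u' u'' φ J :=
  ⟨fun t ht => hsol.1 t (hJI ht), fun t ht => hsol.2.1 t (hJI ht),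
    fun t ht => hsol.2.2.1 t (hJI ht), fun t ht => hsol.2.2.2 t (hJI ht)⟩

variable (M K A) in
noncomputable def piezoEnergy (u u' : ℝ → Fin n → ℝ) (φ : ℝ → Fin k → ℝ) (t : ℝ) : ℝ :=
  (M *ᵥ u' t ⬝ᵥ u' t + K *ᵥ u t ⬝ᵥ u t + A *ᵥ φ t ⬝ᵥ φ t) / 2

theorem piezoEnergy_nonneg (hM : M.PosSemidef) (hK : K.PosSemidef) (hA : A.PosSemidef)
    (t : ℝ) : 0 ≤ piezoEnergy M K A u u' φ t :=
  div_nonneg (add_nonneg (add_nonneg (hM.mulVec_dotProduct_self_nonneg _)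
    (hK.mulVec_dotProduct_self_nonneg _)) (hA.mulVec_dotProduct_self_nonneg _)) zero_le_two

theorem PiezoSolves.hasDerivAt_piezoEnergy (hsol : PiezoSolves M K A C α β f g u u' u'' φ I)
    (hI : IsOpen I) (hM : M.IsSymm) (hK : K.IsSymm) (hA : A.IsSymm)
    (hf : ∀ s ∈ I, f s = 0) (hg : ∀ s ∈ I, g s = 0) (hφ : ∀ s ∈ I, HasDerivAt φ (φ' s) s)
    {t : ℝ} (ht : t ∈ I) :
    HasDerivAt (piezoEnergy M K A u u' φ)
      (-(α * (M *ᵥ u' t ⬝ᵥ u' t) + β * (K *ᵥ u' t ⬝ᵥ u' t))) t := by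
  obtain ⟨hu, hu', hmotion, hconstraint⟩ := hsol
  have hAφ' : A *ᵥ φ' t = Cᵀ *ᵥ u' t := by
    have hlocal : (fun s => A *ᵥ φ s) =ᶠ[𝓝 t] fun s => Cᵀ *ᵥ u s := by
      filter_upwards [hI.mem_nhds ht] with s hs
      exact (sub_eq_zero.1 ((hconstraint s hs).trans (hg s hs))).symm
    exact ((hφ t ht).matrix_mulVec A).unique
      (((hu t ht).matrix_mulVec Cᵀ).congr_of_eventuallyEq hlocal)
  have hpower : M *ᵥ u'' t ⬝ᵥ u' t + α * (M *ᵥ u' t ⬝ᵥ u' t) + K *ᵥ u t ⬝ᵥ u' t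
      + β * (K *ᵥ u' t ⬝ᵥ u' t) + C *ᵥ φ t ⬝ᵥ u' t = 0 := by
    simpa [add_dotProduct, smul_dotProduct, hf t ht] using
      congrArg (· ⬝ᵥ u' t) (hmotion t ht)
  have hcoupling : A *ᵥ φ t ⬝ᵥ φ' t = C *ᵥ φ t ⬝ᵥ u' t := by
    rw [hA.mulVec_dotProduct_comm, hAφ', mulVec_transpose, ← dotProduct_mulVec, dotProduct_comm]
  refine ((((hM.hasDerivAt_mulVec_dotProduct_self (hu' t ht)).add
    (hK.hasDerivAt_mulVec_dotProduct_self (hu t ht))).add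
    (hA.hasDerivAt_mulVec_dotProduct_self (hφ t ht))).div_const 2).congr_deriv ?_
  rw [hM.mulVec_dotProduct_comm (u' t)]
  linarith

theorem PiezoSolves.integrableOn_Ioi_dissipation
    (hsol : PiezoSolves M K A C α β f g u u' u'' φ (Ici t₀))
    (hM : M.PosSemidef) (hK : K.PosSemidef) (hA : A.PosSemidef) (hα : 0 ≤ α) (hβ : 0 ≤ β)
    (hf : ∀ t ≥ t₀, f t = 0) (hg : ∀ t ≥ t₀, g t = 0)
    (hφ : ∀ t ∈ Ici t₀, HasDerivAt φ (φ' t) t) :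
    IntegrableOn (fun t => α * (M *ᵥ u' t ⬝ᵥ u' t) + β * (K *ᵥ u' t ⬝ᵥ u' t)) (Ioi t₀) := by
  have hsymm {m : ℕ} {B : Matrix (Fin m) (Fin m) ℝ} (hB : B.PosSemidef) : B.IsSymm :=
    isHermitian_iff_isSymm.1 hB.isHermitian
  have hdecay (t : ℝ) (ht : t ∈ Ioi t₀) : HasDerivAt (-piezoEnergy M K A u u' φ)
      (α * (M *ᵥ u' t ⬝ᵥ u' t) + β * (K *ᵥ u' t ⬝ᵥ u' t)) t := by
    simpa using ((hsol.mono Ioi_subset_Ici_self).hasDerivAt_piezoEnergy isOpen_Ioi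
      (hsymm hM) (hsymm hK) (hsymm hA) (fun s hs => hf s hs.out.le)
      (fun s hs => hg s hs.out.le) (fun s hs => hφ s (Ioi_subset_Ici_self hs)) ht).neg
  have hcont : ContinuousWithinAt (-piezoEnergy M K A u u' φ) (Ici t₀) t₀ := by
    have hu := (hsol.1 t₀ self_mem_Ici).continuousAt
    have hu' := (hsol.2.1 t₀ self_mem_Ici).continuousAt
    have hφ₀ := (hφ t₀ self_mem_Ici).continuousAt
    refine ContinuousAt.continuousWithinAt ?_
    unfold piezoEnergy
    fun_prop
  exact integrableOn_Ioi_deriv_of_nonneg_of_le hcont hdecay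
    (fun t _ => add_nonneg (mul_nonneg hα (hM.mulVec_dotProduct_self_nonneg _))
      (mul_nonneg hβ (hK.mulVec_dotProduct_self_nonneg _)))
    (fun t _ => neg_nonpos.2 (piezoEnergy_nonneg hM hK hA t))

end Piezo

theorem piezo_discrete_damping_integrable_general {n k : ℕ}
    (M K : Matrix (Fin n) (Fin n) ℝ) (A : Matrix (Fin k) (Fin k) ℝ)
    (C : Matrix (Fin n) (Fin k) ℝ) (α β : ℝ)
    (hM : M.PosDef) (hK : K.PosSemidef) (hA : A.PosDef)
    (hα : 0 < α) (hβ : 0 < β)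
    (t₀ : ℝ) (ht₀ : 0 ≤ t₀)
    (f : ℝ → Fin n → ℝ) (g : ℝ → Fin k → ℝ)
    (hf0 : ∀ t ≥ t₀, f t = 0) (hg0 : ∀ t ≥ t₀, g t = 0)
    (u u' u'' : ℝ → Fin n → ℝ) (φ φ' : ℝ → Fin k → ℝ)
    (hsol : PiezoSolves M K A C α β f g u u' u'' φ (Ici 0))
    (hφ : ∀ t ∈ Ici (0 : ℝ), HasDerivAt φ (φ' t) t) :
    IntegrableOn (fun s => M.mulVec (u' s) ⬝ᵥ u' s) (Ici t₀) ∧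
    IntegrableOn (fun s => K.mulVec (u' s) ⬝ᵥ u' s) (Ici t₀) := by
  have hsol₀ := hsol.mono (Ici_subset_Ici.2 ht₀)
  have hdiss := hsol₀.integrableOn_Ioi_dissipation hM.posSemidef hK hA.posSemidef hα.le hβ.le
    hf0 hg0 fun t ht => hφ t (ht₀.trans ht)
  have hu' : ContinuousOn u' (Ioi t₀) := fun t ht =>
    (hsol₀.2.1 t (Ioi_subset_Ici_self ht)).continuousAt.continuousWithinAt
  have hnonneg {B : Matrix (Fin n) (Fin n) ℝ} (hB : B.PosSemidef) {c : ℝ} (hc : 0 ≤ c) :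
      0 ≤ᵐ[volume.restrict (Ioi t₀)] fun s => c * (B *ᵥ u' s ⬝ᵥ u' s) :=
    ae_of_all _ fun s => mul_nonneg hc (hB.mulVec_dotProduct_self_nonneg _)
  obtain ⟨hMint, hKint⟩ := (integrable_add_iff_of_nonneg
    ((by fun_prop : ContinuousOn _ _).aestronglyMeasurable measurableSet_Ioi)
    (hnonneg hM.posSemidef hα.le) (hnonneg hK hβ.le)).1 hdiss
  rw [integrableOn_Ici_iff_integrableOn_Ioi, integrableOn_Ici_iff_integrableOn_Ioi]
  exact ⟨(integrable_const_mul_iff hα.ne'.isUnit _).1 hMint,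
    (integrable_const_mul_iff hβ.ne'.isUnit _).1 hKint⟩

/-- Long-term behavior with strictly positive damping: the accumulated damping integrals
`∫_{t₀}^∞ ⟨M u'(s), u'(s)⟩ ds` and `∫_{t₀}^∞ ⟨K u'(s), u'(s)⟩ ds` are finite. -/
theorem piezo_discrete_damping_integrable {n k : ℕ}
    (M K : Matrix (Fin n) (Fin n) ℝ) (A : Matrix (Fin k) (Fin k) ℝ)
    (C : Matrix (Fin n) (Fin k) ℝ) (α β : ℝ)
    (hM : M.PosDef) (hK : K.PosSemidef) (hA : A.PosDef)
    (hα : 0 < α) (hβ : 0 < β)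
    (t₀ : ℝ) (ht₀ : 0 ≤ t₀)
    (f : ℝ → Fin n → ℝ) (hf : Continuous f)
    (g g' : ℝ → Fin k → ℝ) (hg : ∀ t, HasDerivAt g (g' t) t) (hg' : Continuous g')
    (hf0 : ∀ t ≥ t₀, f t = 0) (hg0 : ∀ t ≥ t₀, g t = 0)
    (u u' u'' : ℝ → Fin n → ℝ) (φ φ' : ℝ → Fin k → ℝ)
    (hsol : PiezoSolves M K A C α β f g u u' u'' φ (Ici 0))
    (hu'' : ContinuousOn u'' (Ici 0))
    (hφ : ∀ t ∈ Ici (0 : ℝ), HasDerivAt φ (φ' t) t)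
    (hφ' : ContinuousOn φ' (Ici 0)) :
    IntegrableOn (fun s => M.mulVec (u' s) ⬝ᵥ u' s) (Ici t₀) ∧
    IntegrableOn (fun s => K.mulVec (u' s) ⬝ᵥ u' s) (Ici t₀) :=
  piezo_discrete_damping_integrable_general M K A C α β hM hK hA hα hβ t₀ ht₀ f g hf0 hg0 u u' u'' φ
    φ' hsol hφ
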